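/- arXiv:2309.02644 — 8 statements merged into one kernel-verified Lean document; each statement's English description precedes it below -/
import Mathlib

section
/- A nonempty subset σ ⊆ G is a Scarf face of I if and only if both of the following hold: (1) L(σ \ {v}) ≠ L(σ) for every v ∈ σ, and (2) L(σ ∪ {v}) ≠ L(σ) for every v ∈ G \ σ. In particular, if σ has exactly two elements, then σ is a Scarf face if and only if condition (2) holds. -/
open Finset

/-- The label of a set `σ` of exponent vectors: the componentwise maximum
(the exponent vector of the lcm of the monomials corresponding to `σ`,
with `lbl ∅ = 0`). -/
def lbl {n : ℕ} (σ : Finset (Fin n → ℕ)) : Fin n → ℕ :=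
  fun k => σ.sup (fun g => g k)

/-!
A Scarf face `σ` is the unique nonempty subset of `G` with its label. Adding a generator below
the label, or removing one that is redundant for the label, would produce another such subset
(for `σ = {v}` removal leaves `∅`, excluded because `lbl ∅ = 0 ≠ v`); conversely, any `τ` with the label of `σ` lies inside `σ` by (2), and a proper subset of `σ` would
make some `σ.erase v` carry the full label, against (1). For `σ = {a, b}`, condition (1) says
`lbl {a} ≠ lbl {a, b}`, i.e. `b ≰ a`, which is incomparability.
-/

section Label

variable {n : ℕ}

lemma lbl_eq_sup (σ : Finset (Fin n → ℕ)) : lbl σ = σ.sup id := by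
  funext k
  rw [Finset.sup_apply]
  rfl

@[simp]
lemma lbl_empty : lbl (∅ : Finset (Fin n → ℕ)) = 0 := by
  funext k
  simp [lbl]

@[simp]
lemma lbl_singleton (v : Fin n → ℕ) : lbl {v} = v := by
  simp [lbl_eq_sup]

lemma le_lbl {σ : Finset (Fin n → ℕ)} {v : Fin n → ℕ} (hv : v ∈ σ) : v ≤ lbl σ := by
  rw [lbl_eq_sup]
  exact Finset.le_sup (f := id) hv

lemma lbl_mono {σ τ : Finset (Fin n → ℕ)} (h : σ ⊆ τ) : lbl σ ≤ lbl τ := by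
  simp only [lbl_eq_sup]
  exact Finset.sup_mono h

lemma lbl_insert_of_le {σ : Finset (Fin n → ℕ)} {v : Fin n → ℕ} (hv : v ≤ lbl σ) :
    lbl (insert v σ) = lbl σ := by
  simp only [lbl_eq_sup, Finset.sup_insert, id] at hv ⊢
  exact sup_eq_right.mpr hv

end Label

section ScarfFace

variable {n : ℕ} {G σ : Finset (Fin n → ℕ)}

/-- The uniqueness clause in the definition of a Scarf face; `σ.Nonempty` and `σ ⊆ G` are not
part of it. -/
def IsScarfFace (G σ : Finset (Fin n → ℕ)) : Prop :=
  ∀ τ : Finset (Fin n → ℕ), τ.Nonempty → τ ⊆ G → lbl τ = lbl σ → τ = σ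

lemma IsScarfFace.lbl_erase_ne (hG0 : ∀ g ∈ G, g ≠ 0) (hσG : σ ⊆ G) (h : IsScarfFace G σ)
    {v : Fin n → ℕ} (hv : v ∈ σ) : lbl (σ.erase v) ≠ lbl σ := by
  intro heq
  rcases (σ.erase v).eq_empty_or_nonempty with hempty | hne
  · have hσv : σ = {v} := by
      rw [← Finset.insert_erase hv, hempty]
      rfl
    rw [hempty, hσv, lbl_empty, lbl_singleton] at heq
    exact hG0 v (hσG hv) heq.symm
  · exact Finset.erase_eq_self.mp (h _ hne ((Finset.erase_subset v σ).trans hσG) heq) hv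

lemma IsScarfFace.lbl_insert_ne (hσG : σ ⊆ G) (h : IsScarfFace G σ) {v : Fin n → ℕ}
    (hvG : v ∈ G) (hvσ : v ∉ σ) : lbl (insert v σ) ≠ lbl σ := fun heq =>
  hvσ (h _ (Finset.insert_nonempty v σ) (Finset.insert_subset hvG hσG) heq ▸
    Finset.mem_insert_self v σ)

lemma isScarfFace_of_lbl_erase_ne_of_lbl_insert_ne
    (herase : ∀ v ∈ σ, lbl (σ.erase v) ≠ lbl σ)
    (hinsert : ∀ v ∈ G, v ∉ σ → lbl (insert v σ) ≠ lbl σ) : IsScarfFace G σ := by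
  intro τ _ hτG hlbl
  have hτσ : τ ⊆ σ := fun v hvτ => by
    by_contra hvσ
    exact hinsert v (hτG hvτ) hvσ (lbl_insert_of_le (hlbl ▸ le_lbl hvτ))
  by_contra hne
  obtain ⟨v, hvσ, hvτ⟩ := Finset.exists_of_ssubset (hτσ.ssubset_of_ne hne)
  refine herase v hvσ (le_antisymm (lbl_mono (Finset.erase_subset v σ)) ?_)
  exact hlbl ▸ lbl_mono (Finset.subset_erase.mpr ⟨hτσ, hvτ⟩)

theorem isScarfFace_iff (hG0 : ∀ g ∈ G, g ≠ 0) (hσG : σ ⊆ G) :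
    IsScarfFace G σ ↔ (∀ v ∈ σ, lbl (σ.erase v) ≠ lbl σ) ∧
      (∀ v ∈ G, v ∉ σ → lbl (insert v σ) ≠ lbl σ) :=
  ⟨fun h => ⟨fun _ hv => h.lbl_erase_ne hG0 hσG hv, fun _ hvG hvσ => h.lbl_insert_ne hσG hvG hvσ⟩,
    fun ⟨herase, hinsert⟩ => isScarfFace_of_lbl_erase_ne_of_lbl_insert_ne herase hinsert⟩

lemma lbl_erase_ne_of_card_eq_two (hGincomp : ∀ g ∈ G, ∀ h ∈ G, g ≠ h → ¬ g ≤ h)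
    (hσG : σ ⊆ G) (hcard : σ.card = 2) {v : Fin n → ℕ} (hv : v ∈ σ) :
    lbl (σ.erase v) ≠ lbl σ := by
  obtain ⟨w, hw⟩ := Finset.card_eq_one.mp (by rw [Finset.card_erase_of_mem hv, hcard])
  have hwσ : w ∈ σ.erase v := hw ▸ Finset.mem_singleton_self w
  rw [hw, lbl_singleton]
  intro hlbl
  exact hGincomp v (hσG hv) w (hσG (Finset.mem_of_mem_erase hwσ)) (Finset.ne_of_mem_erase hwσ).symm
    (hlbl ▸ le_lbl hv)

end ScarfFace

theorem stmt0_general {n : ℕ} (G : Finset (Fin n → ℕ))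
    (hG0 : ∀ g ∈ G, g ≠ 0)
    (hGincomp : ∀ g ∈ G, ∀ h ∈ G, g ≠ h → ¬ g ≤ h)
    (σ : Finset (Fin n → ℕ)) (hσG : σ ⊆ G) :
    ((∀ τ : Finset (Fin n → ℕ), τ.Nonempty → τ ⊆ G → lbl τ = lbl σ → τ = σ) ↔
      ((∀ v ∈ σ, lbl (σ.erase v) ≠ lbl σ) ∧
       (∀ v ∈ G, v ∉ σ → lbl (insert v σ) ≠ lbl σ))) ∧
    (σ.card = 2 →
      ((∀ τ : Finset (Fin n → ℕ), τ.Nonempty → τ ⊆ G → lbl τ = lbl σ → τ = σ) ↔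
        (∀ v ∈ G, v ∉ σ → lbl (insert v σ) ≠ lbl σ))) := by
  refine ⟨isScarfFace_iff hG0 hσG, fun hcard => ?_⟩
  exact (isScarfFace_iff hG0 hσG).trans
    (and_iff_right fun _ hv => lbl_erase_ne_of_card_eq_two hGincomp hσG hcard hv)

/-- Lemma 2.1 (l:expansion): a nonempty `σ ⊆ G` is a Scarf face of the monomial
ideal with (pairwise incomparable, nonzero) exponent vectors `G` iff
(1) removing any vertex changes the label and (2) adding any vertex changes the
label.  If `σ` has exactly two elements, condition (2) alone suffices. -/
theorem stmt0 {n : ℕ} (hn : 1 ≤ n) (G : Finset (Fin n → ℕ))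
    (hG0 : ∀ g ∈ G, g ≠ 0)
    (hGincomp : ∀ g ∈ G, ∀ h ∈ G, g ≠ h → ¬ g ≤ h)
    (σ : Finset (Fin n → ℕ)) (hσG : σ ⊆ G) (hσ : σ.Nonempty) :
    ((∀ τ : Finset (Fin n → ℕ), τ.Nonempty → τ ⊆ G → lbl τ = lbl σ → τ = σ) ↔
      ((∀ v ∈ σ, lbl (σ.erase v) ≠ lbl σ) ∧
       (∀ v ∈ G, v ∉ σ → lbl (insert v σ) ≠ lbl σ))) ∧
    (σ.card = 2 →
      ((∀ τ : Finset (Fin n → ℕ), τ.Nonempty → τ ⊆ G → lbl τ = lbl σ → τ = σ) ↔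
        (∀ v ∈ G, v ∉ σ → lbl (insert v σ) ≠ lbl σ))) :=
  stmt0_general G hG0 hGincomp σ hσG
end

section
/- Let n ≥ 1 and let M_1,…,M_q be distinct subsets of [n] with M_i ⊄ M_j for all i ≠ j. If a nonempty subset σ ⊆ N^r_q is a Scarf face of I^r in the m-labeling (i.e., every nonempty τ ⊆ N^r_q with L_m(τ) = L_m(σ) equals σ), then σ is a Scarf face of E_q^r, i.e., every nonempty τ ⊆ N^r_q with L(τ) = L(σ) equals σ. In other words, Scarf(I^r) ⊆ Scarf(E_q^r). -/
open Finset

/-- The exponent of the variable `x_A` in `lcm(ε^a : a ∈ σ)`: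
`eLabel σ A = max_{a ∈ σ} ∑_{i ∈ A} a i` (and `0` if `σ = ∅`). -/
def eLabel {q : ℕ} (σ : Finset (Fin q → ℕ)) (A : Finset (Fin q)) : ℕ :=
  σ.sup (fun a => ∑ i ∈ A, a i)

/-- `σ` is a face of the Scarf complex of `E_q^r`: a nonempty subset of
`N^r_q` such that every nonempty `τ ⊆ N^r_q` with the same label equals `σ`. -/
def IsScarf (q r : ℕ) (σ : Finset (Fin q → ℕ)) : Prop :=
  σ.Nonempty ∧ (∀ a ∈ σ, ∑ i, a i = r) ∧
    ∀ τ : Finset (Fin q → ℕ), τ.Nonempty → (∀ a ∈ τ, ∑ i, a i = r) →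
      (∀ A : Finset (Fin q), A.Nonempty → eLabel τ A = eLabel σ A) → τ = σ

/-- The set `aU = {c ∈ N^r_q : a i ≤ c i ≤ a i + 1 for all i}`, i.e. the
vertex set of the face `ε^a · U_q^{r-|a|}` of the Taylor complex of `E_q^r`. -/
def aUF (q r : ℕ) (a : Fin q → ℕ) : Finset (Fin q → ℕ) :=
  (Finset.Icc a (a + 1)).filter (fun c => ∑ i, c i = r)

/-- The exponent of `x_k` in `lcm(m^a : a ∈ σ)`, where `m_j = ∏_{k ∈ M j} x_k`. -/
def mLabel {n q : ℕ} (M : Fin q → Finset (Fin n)) (σ : Finset (Fin q → ℕ)) (k : Fin n) : ℕ :=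
  σ.sup (fun a => ∑ j ∈ Finset.univ.filter (fun j => k ∈ M j), a j)

theorem mLabel_eq_eLabel {n q : ℕ} (M : Fin q → Finset (Fin n)) (σ : Finset (Fin q → ℕ))
    (k : Fin n) : mLabel M σ k = eLabel σ (univ.filter fun j => k ∈ M j) :=
  rfl

@[simp]
theorem eLabel_empty {q : ℕ} (σ : Finset (Fin q → ℕ)) : eLabel σ ∅ = 0 := by
  simp [eLabel]

theorem mLabel_eq_of_eLabel_eq {n q : ℕ} (M : Fin q → Finset (Fin n))
    {σ τ : Finset (Fin q → ℕ)} (h : ∀ A : Finset (Fin q), A.Nonempty → eLabel τ A = eLabel σ A) :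
    mLabel M τ = mLabel M σ := by
  funext k
  rw [mLabel_eq_eLabel, mLabel_eq_eLabel]
  rcases (univ.filter fun j => k ∈ M j).eq_empty_or_nonempty with hA | hA
  · simp only [hA, eLabel_empty]
  · exact h _ hA

theorem stmt1_general (n q r : ℕ)
    (M : Fin q → Finset (Fin n))
    (σ : Finset (Fin q → ℕ)) (hσ : σ.Nonempty) (hσr : ∀ a ∈ σ, ∑ i, a i = r)
    (hScarfI : ∀ τ : Finset (Fin q → ℕ), τ.Nonempty → (∀ a ∈ τ, ∑ i, a i = r) →
      (∀ k : Fin n, mLabel M τ k = mLabel M σ k) → τ = σ) :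
    IsScarf q r σ :=
  ⟨hσ, hσr, fun τ hτ hτr hlab => hScarfI τ hτ hτr (congrFun (mLabel_eq_of_eLabel_eq M hlab))⟩

/-- Proposition (p:psi-Scarf): `Scarf(I^r) ⊆ Scarf(E_q^r)`, where `I` is
minimally generated by the square-free monomials with supports `M 1, …, M q`. -/
theorem stmt1 (n q r : ℕ) (hn : 1 ≤ n) (hq : 1 ≤ q) (hr : 1 ≤ r)
    (M : Fin q → Finset (Fin n))
    (hM : ∀ i j : Fin q, i ≠ j → ¬ M i ⊆ M j)
    (σ : Finset (Fin q → ℕ)) (hσ : σ.Nonempty) (hσr : ∀ a ∈ σ, ∑ i, a i = r)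
    (hScarfI : ∀ τ : Finset (Fin q → ℕ), τ.Nonempty → (∀ a ∈ τ, ∑ i, a i = r) →
      (∀ k : Fin n, mLabel M τ k = mLabel M σ k) → τ = σ) :
    IsScarf q r σ :=
  stmt1_general n q r M σ hσ hσr hScarfI
end

section
/- A nonempty subset σ ⊆ N^r_q is a Scarf face of E_q^r if and only if for every nonempty subset σ' ⊆ σ the following holds: every b ∈ N^r_q satisfying ∑_{i∈A} b_i ≤ L(σ')(A) for all nonempty A ⊆ [q] (i.e., every lattice point of the polyhedron determined by σ') already belongs to σ'. -/
open Finset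

/-!
A point `b` lies in the polyhedron of `σ'` exactly when adding it to `σ'` does not change the
label. So if `σ` is Scarf and `b` lies in the polyhedron of some `σ' ⊆ σ`, then `insert b σ` has
the label of `σ`, forcing `b ∈ σ`; and if `b ∉ σ'`, then `σ' ⊆ σ.erase b`, so `σ.erase b` still has
the label of `σ`, which is absurd. Conversely, any `τ` with the label of `σ` lies in the polyhedron
of `σ`, hence `τ ⊆ σ`, and then `σ` lies in the polyhedron of `τ`, hence `σ ⊆ τ`.
-/

section eLabel

variable {q : ℕ} {σ τ : Finset (Fin q → ℕ)} {a b : Fin q → ℕ} {A : Finset (Fin q)}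

lemma eLabel_mono (h : σ ⊆ τ) (A : Finset (Fin q)) : eLabel σ A ≤ eLabel τ A :=
  Finset.sup_mono h

lemma le_eLabel (h : a ∈ σ) (A : Finset (Fin q)) : ∑ i ∈ A, a i ≤ eLabel σ A :=
  Finset.le_sup h

lemma eLabel_insert_of_le (h : ∑ i ∈ A, b i ≤ eLabel σ A) :
    eLabel (insert b σ) A = eLabel σ A := by
  rw [eLabel, Finset.sup_insert]
  exact sup_eq_right.mpr h

lemma eLabel_erase_of_le (hb : b ∈ σ) (h : ∑ i ∈ A, b i ≤ eLabel (σ.erase b) A) :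
    eLabel (σ.erase b) A = eLabel σ A := by
  conv_rhs => rw [← Finset.insert_erase hb]
  exact (eLabel_insert_of_le h).symm

end eLabel

namespace IsScarf

variable {q r : ℕ} {σ σ' : Finset (Fin q → ℕ)} {b : Fin q → ℕ}

lemma mem_of_le_eLabel (hS : IsScarf q r σ) (hb : ∑ i, b i = r)
    (hlab : ∀ A : Finset (Fin q), A.Nonempty → ∑ i ∈ A, b i ≤ eLabel σ A) : b ∈ σ := by
  obtain ⟨-, hσr, huniq⟩ := hS
  have hins : insert b σ = σ := by
    refine huniq _ (insert_nonempty _ _) ?_ fun A hA => eLabel_insert_of_le (hlab A hA)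
    intro a ha
    rcases Finset.mem_insert.mp ha with rfl | ha
    · exact hb
    · exact hσr a ha
  exact hins ▸ Finset.mem_insert_self b σ

lemma mem_of_le_eLabel_of_subset (hS : IsScarf q r σ) (hsub : σ' ⊆ σ) (hne : σ'.Nonempty)
    (hb : ∑ i, b i = r)
    (hlab : ∀ A : Finset (Fin q), A.Nonempty → ∑ i ∈ A, b i ≤ eLabel σ' A) : b ∈ σ' := by
  have hbσ : b ∈ σ :=
    hS.mem_of_le_eLabel hb fun A hA => (hlab A hA).trans (eLabel_mono hsub A)
  by_contra hbσ'
  have hsub' : σ' ⊆ σ.erase b := fun x hx =>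
    Finset.mem_erase.mpr ⟨fun h => hbσ' (h ▸ hx), hsub hx⟩
  have herase : σ.erase b = σ :=
    hS.2.2 _ (hne.mono hsub') (fun a ha => hS.2.1 a (Finset.mem_of_mem_erase ha))
      fun A hA => eLabel_erase_of_le hbσ ((hlab A hA).trans (eLabel_mono hsub' A))
  exact Finset.notMem_erase b σ (herase.symm ▸ hbσ)

end IsScarf

lemma isScarf_of_forall_mem_of_le_eLabel {q r : ℕ} {σ : Finset (Fin q → ℕ)}
    (hσ : σ.Nonempty) (hσr : ∀ a ∈ σ, ∑ i, a i = r)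
    (H : ∀ σ' ⊆ σ, σ'.Nonempty → ∀ b : Fin q → ℕ, ∑ i, b i = r →
      (∀ A : Finset (Fin q), A.Nonempty → ∑ i ∈ A, b i ≤ eLabel σ' A) → b ∈ σ') :
    IsScarf q r σ := by
  refine ⟨hσ, hσr, fun τ hτne hτr hτlab => ?_⟩
  have hτσ : τ ⊆ σ := fun b hb =>
    H σ subset_rfl hσ b (hτr b hb) fun A hA => (le_eLabel hb A).trans_eq (hτlab A hA)
  exact hτσ.antisymm fun a ha =>
    H τ hτσ hτne a (hσr a ha) fun A hA => (le_eLabel ha A).trans_eq (hτlab A hA).symm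

theorem stmt3_general (q r : ℕ)
    (σ : Finset (Fin q → ℕ)) (hσ : σ.Nonempty) (hσr : ∀ a ∈ σ, ∑ i, a i = r) :
    IsScarf q r σ ↔
      ∀ σ' ⊆ σ, σ'.Nonempty →
        ∀ b : Fin q → ℕ, ∑ i, b i = r →
          (∀ A : Finset (Fin q), A.Nonempty → ∑ i ∈ A, b i ≤ eLabel σ' A) →
          b ∈ σ' :=
  ⟨fun hS _ hsub hne _ hb hlab => hS.mem_of_le_eLabel_of_subset hsub hne hb hlab,
    isScarf_of_forall_mem_of_le_eLabel hσ hσr⟩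

/-- Proposition (p:faces): a nonempty `σ ⊆ N^r_q` is a Scarf face of `E_q^r`
iff for every nonempty `σ' ⊆ σ`, the only lattice points of the polyhedron
`P_{σ'}` (i.e. the `b ∈ N^r_q` with `∑_{i ∈ A} b i ≤ L(σ')(A)` for all
nonempty `A`) are the elements of `σ'`. -/
theorem stmt3 (q r : ℕ) (hq : 1 ≤ q) (hr : 1 ≤ r)
    (σ : Finset (Fin q → ℕ)) (hσ : σ.Nonempty) (hσr : ∀ a ∈ σ, ∑ i, a i = r) :
    IsScarf q r σ ↔
      ∀ σ' ⊆ σ, σ'.Nonempty →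
        ∀ b : Fin q → ℕ, ∑ i, b i = r →
          (∀ A : Finset (Fin q), A.Nonempty → ∑ i ∈ A, b i ≤ eLabel σ' A) →
          b ∈ σ' :=
  stmt3_general q r σ hσ hσr
end

section
/- Assume q ≥ 2. Then: (i) if a ∈ ℕ^q satisfies r−q < |a| < r and b ∈ ℕ^q satisfies |b| < r and aU ⊆ bU, then a = b; and (ii) for every b ∈ ℕ^q with |b| < r there exists a ∈ ℕ^q with r−q < |a| < r and bU ⊆ aU. Consequently, the sets aU with r−q < |a| < r are exactly the maximal elements, with respect to inclusion, among all sets bU with b ∈ ℕ^q and |b| < r. -/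
/-!
Write `s = r - |a|`. If `0 < s < q`, the vectors `a + 1_S` with `|S| = s` lie in `aU`, and `S` can
be chosen either to avoid or to contain any given index `i`; if also `aU ⊆ bU`, the first choice
gives `b i ≤ a i` and the second `a i ≤ b i`. For (ii), `b` itself qualifies when `|b| > r - q`;
otherwise `bU` is the singleton `{b + 1}` (when `|b| = r - q`) or empty, and `q ≥ 2` leaves room
for an `a` with `r - q < |a| < r` covering it.
-/

open Finset

lemma mem_aUF {q r : ℕ} {a c : Fin q → ℕ} :
    c ∈ aUF q r a ↔ (∀ i, a i ≤ c i) ∧ (∀ i, c i ≤ a i + 1) ∧ ∑ i, c i = r := by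
  simp [aUF, Finset.mem_Icc, Pi.le_def, and_assoc]

lemma sum_add_one_eq (q : ℕ) (c : Fin q → ℕ) : ∑ j, (c j + 1) = ∑ j, c j + q := by
  simp [Finset.sum_add_distrib]

lemma add_indicator_mem_aUF {q r : ℕ} (a : Fin q → ℕ) {S : Finset (Fin q)}
    (hS : ∑ j, a j + #S = r) : (fun j => a j + if j ∈ S then 1 else 0) ∈ aUF q r a := by
  refine mem_aUF.2 ⟨fun j => Nat.le_add_right _ _, fun j => by split <;> omega, ?_⟩
  simpa [Finset.sum_add_distrib] using hS

lemma exists_card_eq_notMem {q k : ℕ} (i : Fin q) (hk : k < q) :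
    ∃ S : Finset (Fin q), i ∉ S ∧ #S = k := by
  obtain ⟨S, hS, hcard⟩ := Finset.exists_subset_card_eq (s := univ.erase i) (n := k)
    (by rw [card_erase_of_mem (mem_univ i), card_univ, Fintype.card_fin]; omega)
  exact ⟨S, fun hi => (mem_erase.1 (hS hi)).1 rfl, hcard⟩

lemma ge_of_aUF_subset {q r : ℕ} {a b : Fin q → ℕ} (hlt : r < q + ∑ i, a i)
    (hle : ∑ i, a i ≤ r) (hsub : aUF q r a ⊆ aUF q r b) : b ≤ a := by
  intro i
  obtain ⟨S, hiS, hS⟩ := exists_card_eq_notMem (k := r - ∑ j, a j) i (by omega)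
  have hb := (mem_aUF.1 (hsub (add_indicator_mem_aUF a (by omega : ∑ j, a j + #S = r)))).1 i
  simpa [hiS] using hb

lemma le_of_aUF_subset {q r : ℕ} {a b : Fin q → ℕ} (hle : r ≤ q + ∑ i, a i)
    (hlt : ∑ i, a i < r) (hsub : aUF q r a ⊆ aUF q r b) : a ≤ b := by
  intro i
  obtain ⟨T, hiT, hT⟩ := exists_card_eq_notMem (k := r - ∑ j, a j - 1) i (by omega)
  have hcard : ∑ j, a j + #(insert i T) = r := by rw [card_insert_of_notMem hiT]; omega
  have hb := (mem_aUF.1 (hsub (add_indicator_mem_aUF a hcard))).2.1 i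
  simpa using hb

lemma aUF_eq_empty {q r : ℕ} {b : Fin q → ℕ} (h : q + ∑ i, b i < r) : aUF q r b = ∅ := by
  refine eq_empty_of_forall_notMem fun c hc => ?_
  obtain ⟨-, hcb, hc⟩ := mem_aUF.1 hc
  have := sum_add_one_eq q b ▸ Finset.sum_le_sum fun j (_ : j ∈ univ) => hcb j
  omega

lemma aUF_subset_singleton {q r : ℕ} {b : Fin q → ℕ} (h : r = q + ∑ i, b i) :
    aUF q r b ⊆ {b + 1} := by
  intro c hc
  obtain ⟨-, hcb, hc⟩ := mem_aUF.1 hc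
  have heq := (Finset.sum_eq_sum_iff_of_le (s := univ) (g := fun j => b j + 1)
    fun j _ => hcb j).1 (by rw [sum_add_one_eq]; omega)
  exact mem_singleton.2 (funext fun j => heq j (mem_univ j))

lemma exists_maximal_aUF_superset {q r : ℕ} (hq : 2 ≤ q) {b : Fin q → ℕ} (hb : ∑ i, b i < r) :
    ∃ a : Fin q → ℕ, r < q + ∑ i, a i ∧ ∑ i, a i < r ∧ aUF q r b ⊆ aUF q r a := by
  have : NeZero q := ⟨by omega⟩
  rcases lt_trichotomy r (q + ∑ i, b i) with h | h | h
  · exact ⟨b, h, hb, subset_rfl⟩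
  · refine ⟨b + Pi.single 0 1, ?_, ?_, ?_⟩
    · simp [Finset.sum_add_distrib]; omega
    · simp [Finset.sum_add_distrib]; omega
    · refine (aUF_subset_singleton h).trans (singleton_subset_iff.2 (mem_aUF.2 ?_))
      refine ⟨fun j => ?_, fun j => ?_, by simp [h, Finset.sum_add_distrib, add_comm]⟩ <;>
        by_cases hj : j = 0 <;> simp [hj]
  · refine ⟨Pi.single 0 (r - 1), ?_, ?_, ?_⟩ <;> simp [aUF_eq_empty h] <;> omega

theorem stmt5_general (q r : ℕ) (hq : 2 ≤ q) :
    (∀ a b : Fin q → ℕ, r < q + ∑ i, a i → ∑ i, a i < r → ∑ i, b i < r →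
      aUF q r a ⊆ aUF q r b → a = b) ∧
    (∀ b : Fin q → ℕ, ∑ i, b i < r →
      ∃ a : Fin q → ℕ, r < q + ∑ i, a i ∧ ∑ i, a i < r ∧ aUF q r b ⊆ aUF q r a) :=
  ⟨fun _ _ hlt hle _ hsub => le_antisymm (le_of_aUF_subset hlt.le hle hsub)
      (ge_of_aUF_subset hlt hle.le hsub),
    fun _ hb => exists_maximal_aUF_superset hq hb⟩

/-- Lemma (l:facets)(3): for `q ≥ 2`, the sets `aU` with `r - q < |a| < r`
(the condition `r - q < |a|` is written as `r < q + |a|`) are exactly the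
maximal elements, with respect to inclusion, among all sets `bU` with
`|b| < r`: (i) any such `aU` contained in a `bU` forces `a = b` (so `aU` is
maximal), and (ii) every `bU` with `|b| < r` is contained in such an `aU`. -/
theorem stmt5 (q r : ℕ) (hq : 2 ≤ q) (hr : 1 ≤ r) :
    (∀ a b : Fin q → ℕ, r < q + ∑ i, a i → ∑ i, a i < r → ∑ i, b i < r →
      aUF q r a ⊆ aUF q r b → a = b) ∧
    (∀ b : Fin q → ℕ, ∑ i, b i < r →
      ∃ a : Fin q → ℕ, r < q + ∑ i, a i ∧ ∑ i, a i < r ∧ aUF q r b ⊆ aUF q r a) :=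
  stmt5_general q r hq
end

section
/- Let a ∈ ℕ^q with r−q < |a| < r and let b ∈ N^r_q with b ∉ aU. Then there exists c ∈ aU such that L(aU ∪ {b}) = L((aU ∪ {b}) \ {c}), i.e., lcm of the monomials indexed by aU ∪ {b} is unchanged upon removing ε^c. -/
/-!
With `k = r - |a|`, the set `aU` consists of the vectors `a + 1_T` with `#T = k`, and the
`A`-coordinate of the label of `a + 1_T` is `∑_{i ∈ A} a i + #(A ∩ T)`. Choose `T` maximizing
`∑_{i ∈ T} (b i - a i)` among `k`-sets; an exchange argument gives
`∑_{i ∈ T} b i ≥ ∑_{i ∈ T} a i + k`, so `ε^b` dominates `c = a + 1_T` at `A = T`.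
For `A ≠ T`, trading one element of `T` for one outside gives `T' ≠ T` with
`#(A ∩ T') ≥ #(A ∩ T)`, so `a + 1_{T'}` dominates `c` at `A`.
-/

open Finset

section Raise

variable {ι : Type*} [DecidableEq ι]

def raise (a : ι → ℕ) (T : Finset ι) : ι → ℕ := fun i => if i ∈ T then a i + 1 else a i

theorem raise_apply (a : ι → ℕ) (T : Finset ι) (i : ι) :
    raise a T i = a i + if i ∈ T then 1 else 0 := by
  unfold raise; split_ifs <;> rfl

theorem sum_raise (a : ι → ℕ) (T A : Finset ι) :
    ∑ i ∈ A, raise a T i = ∑ i ∈ A, a i + #(A ∩ T) := by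
  simp only [raise_apply, sum_add_distrib, sum_boole, filter_mem_eq_inter, Nat.cast_id]

theorem raise_injective (a : ι → ℕ) : Function.Injective (raise a) := by
  intro T T' h
  ext i
  have := congrFun h i
  simp only [raise_apply] at this
  split_ifs at this <;> simp_all

end Raise

theorem raise_mem_aUF {q r : ℕ} (a : Fin q → ℕ) (T : Finset (Fin q))
    (hT : ∑ i, a i + #T = r) :
    raise a T ∈ aUF q r a := by
  simp only [aUF, mem_filter, mem_Icc, sum_raise, univ_inter, hT, and_true]
  constructor <;> intro i <;> simp only [raise_apply, Pi.add_apply, Pi.one_apply] <;>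
    split_ifs <;> omega

theorem exists_swap_card_inter_le {ι : Type*} [Fintype ι] [DecidableEq ι] {T A : Finset ι}
    (hT : T.Nonempty) (hTu : T ≠ univ) (hAT : A ≠ T) :
    ∃ T', #T' = #T ∧ T' ≠ T ∧ #(A ∩ T) ≤ #(A ∩ T') := by
  obtain ⟨i, hiT, hj⟩ : ∃ i ∈ T, ∃ j ∉ T, j ∈ A ∨ i ∉ A := by
    obtain ⟨j, hjT⟩ : ∃ j, j ∉ T := by simpa [eq_univ_iff_forall] using hTu
    by_cases hAsub : A ⊆ T
    · obtain ⟨i, hiT, hiA⟩ := exists_of_ssubset (hAsub.ssubset_of_ne hAT)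
      exact ⟨i, hiT, j, hjT, Or.inr hiA⟩
    · obtain ⟨j, hjA, hjT⟩ := not_subset.mp hAsub
      obtain ⟨i, hiT⟩ := hT
      exact ⟨i, hiT, j, hjT, Or.inl hjA⟩
  obtain ⟨j, hjT, hjA⟩ := hj
  have hjT' : j ∉ T.erase i := fun h => hjT (mem_of_mem_erase h)
  refine ⟨insert j (T.erase i), ?_, fun h => hjT (h ▸ mem_insert_self j _), ?_⟩
  · rw [card_insert_of_notMem hjT', card_erase_add_one hiT]
  · rcases hjA with hjA | hiA
    · rw [inter_insert_of_mem hjA, card_insert_of_notMem (by simp [hjT']), inter_erase]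
      have := pred_card_le_card_erase (s := A ∩ T) (a := i)
      omega
    · exact card_le_card fun x hx => by
        simp only [mem_inter, mem_insert, mem_erase] at hx ⊢
        exact ⟨hx.1, Or.inr ⟨fun h => hiA (h ▸ hx.1), hx.2⟩⟩

theorem exists_card_eq_le_sum {ι : Type*} [Fintype ι] [DecidableEq ι] (d : ι → ℤ) {k : ℕ}
    (hk : k ≤ Fintype.card ι) (hd : ∑ i, d i = k) :
    ∃ T : Finset ι, #T = k ∧ (k : ℤ) ≤ ∑ i ∈ T, d i := by
  obtain ⟨T, hT, hmax⟩ := exists_max_image (univ.powersetCard k) (fun T => ∑ i ∈ T, d i)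
    (powersetCard_nonempty.mpr (by simpa using hk))
  have hTk : #T = k := (mem_powersetCard.mp hT).2
  refine ⟨T, hTk, ?_⟩
  by_contra! hlt
  -- the complement carries positive mass, so some `j ∉ T` has `d j ≥ 1`
  obtain ⟨j, hjT, hj⟩ : ∃ j ∈ Tᶜ, 1 ≤ d j := by
    by_contra! hno
    have := sum_add_sum_compl T d
    linarith [sum_nonpos fun j hj => Int.lt_add_one_iff.mp (hno j hj)]
  have hjT' : j ∉ T := by simpa using hjT
  -- maximality of `T` against the swap `i ↔ j` forces `d i ≥ d j` on `T`
  have hge : ∀ i ∈ T, 1 ≤ d i := by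
    intro i hi
    have hjT'' : j ∉ T.erase i := fun h => hjT' (mem_of_mem_erase h)
    have := hmax (insert j (T.erase i)) (mem_powersetCard.mpr ⟨subset_univ _, by
      rw [card_insert_of_notMem hjT'', card_erase_add_one hi, hTk]⟩)
    rw [sum_insert hjT'', sum_erase_eq_sub hi] at this
    linarith
  have := card_nsmul_le_sum T d 1 hge
  rw [hTk, nsmul_one] at this
  linarith

theorem exists_card_eq_sum_add_le_sum {ι : Type*} [Fintype ι] [DecidableEq ι] (a b : ι → ℕ)
    {k : ℕ} (hk : k ≤ Fintype.card ι) (hab : ∑ i, b i = ∑ i, a i + k) :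
    ∃ T : Finset ι, #T = k ∧ ∑ i ∈ T, a i + k ≤ ∑ i ∈ T, b i := by
  obtain ⟨T, hTk, hT⟩ := exists_card_eq_le_sum (fun i => (b i : ℤ) - a i) hk
    (by simp only [sum_sub_distrib]; push_cast [← Nat.cast_sum, hab]; ring)
  refine ⟨T, hTk, ?_⟩
  simp only [sum_sub_distrib] at hT
  push_cast [← Nat.cast_sum] at hT
  omega

theorem eLabel_erase_eq {q : ℕ} {σ : Finset (Fin q → ℕ)} {c : Fin q → ℕ}
    {A : Finset (Fin q)}
    (h : ∃ e ∈ σ.erase c, ∑ i ∈ A, c i ≤ ∑ i ∈ A, e i) :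
    eLabel (σ.erase c) A = eLabel σ A := by
  obtain ⟨e, he, hce⟩ := h
  refine le_antisymm (sup_mono (erase_subset c σ)) (Finset.sup_le fun x hx => ?_)
  by_cases hxc : x = c
  · subst hxc
    exact hce.trans (le_sup (f := fun a => ∑ i ∈ A, a i) he)
  · exact le_sup (f := fun a => ∑ i ∈ A, a i) (mem_erase.mpr ⟨hxc, hx⟩)

theorem stmt7_general (q r : ℕ) (a : Fin q → ℕ)
    (h1 : r < q + ∑ i, a i) (h2 : ∑ i, a i < r)
    (b : Fin q → ℕ) (hb : ∑ i, b i = r) (hbU : b ∉ aUF q r a) :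
    ∃ c ∈ aUF q r a,
      ∀ A : Finset (Fin q),
        eLabel (insert b (aUF q r a)) A = eLabel ((insert b (aUF q r a)).erase c) A := by
  set k := r - ∑ i, a i
  obtain ⟨T, hTk, hTb⟩ :=
    exists_card_eq_sum_add_le_sum a b (k := k) (by rw [Fintype.card_fin]; omega) (by omega)
  have hmem : ∀ T' : Finset (Fin q), #T' = k → raise a T' ∈ aUF q r a :=
    fun T' hT' => raise_mem_aUF a T' (by omega)
  refine ⟨raise a T, hmem T hTk, fun A => (eLabel_erase_eq ?_).symm⟩
  by_cases hAT : A = T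
  · refine ⟨b, mem_erase.mpr ⟨fun h => hbU (h ▸ hmem T hTk), mem_insert_self b _⟩, ?_⟩
    rwa [sum_raise, hAT, inter_self, hTk]
  · obtain ⟨T', hT'k, hT'T, hle⟩ := exists_swap_card_inter_le
      (card_pos.mp (by omega)) (fun h => by rw [h, card_univ, Fintype.card_fin] at hTk; omega) hAT
    refine ⟨raise a T', mem_erase.mpr ⟨(raise_injective a).ne hT'T,
      mem_insert_of_mem (hmem T' (hT'k.trans hTk))⟩, ?_⟩
    simp only [sum_raise]
    omega

/-- Proposition (p:german): if `r - q < |a| < r` (written `r < q + |a|` and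
`|a| < r`) and `b ∈ N^r_q` with `b ∉ aU`, then there is `c ∈ aU` such that the
lcm of the monomials indexed by `aU ∪ {b}` is unchanged on removing `ε^c`. -/
theorem stmt7 (q r : ℕ) (hq : 1 ≤ q) (hr : 1 ≤ r) (a : Fin q → ℕ)
    (h1 : r < q + ∑ i, a i) (h2 : ∑ i, a i < r)
    (b : Fin q → ℕ) (hb : ∑ i, b i = r) (hbU : b ∉ aUF q r a) :
    ∃ c ∈ aUF q r a,
      ∀ A : Finset (Fin q),
        eLabel (insert b (aUF q r a)) A = eLabel ((insert b (aUF q r a)).erase c) A :=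
  stmt7_general q r a h1 h2 b hb hbU
end

section
/- Let a, b ∈ N^r_q. (1) If u ∈ Supp(a), k ∈ Supp(b), and Supp(a) = {u} or Supp(b) = {k}, then ε^{a − e_u + e_k} divides lcm(ε^a, ε^b); that is, ∑_{i∈A}(a − e_u + e_k)_i ≤ max(∑_{i∈A} a_i, ∑_{i∈A} b_i) for every nonempty A ⊆ [q]. (2) If Supp(a) = {u, v} and Supp(b) = {k, l} with u ≠ v and k ≠ l, then ε^{a − e_u − e_v + e_k + e_l} divides lcm(ε^a, ε^b); that is, ∑_{i∈A}(a − e_u − e_v + e_k + e_l)_i ≤ max(∑_{i∈A} a_i, ∑_{i∈A} b_i) for every nonempty A ⊆ [q]. -/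
/-!
Write `s = ∑_{i ∈ A} a i`, `t = ∑_{i ∈ A} b i`, and let `x ≤ a` and `y` be the vectors removed
from and added to `a`, with `X`, `Y` their sums over `A`. The exchanged vector has sum `s - X + Y`
over `A`, so it suffices that `Y ≤ X` or `s + Y ≤ t + X`. When `X` is too small, either `x`
vanishes on `A`, and then so does `a` (its support lies in that of `x`), giving `s = 0`; or `x`
misses some point outside `A`, and then `s < ∑ a = ∑ b`, while `y` lying entirely in `A` forces
the support of `b` into `A`, giving `t = ∑ b`.
-/

open Finset

section Exchange

variable {ι : Type*} {A : Finset ι} {a b x y : ι → ℕ}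

lemma sum_tsub_add_add_sum_eq (hx : x ≤ a) :
    ∑ i ∈ A, (a i - x i + y i) + ∑ i ∈ A, x i = ∑ i ∈ A, a i + ∑ i ∈ A, y i := by
  rw [← sum_add_distrib, ← sum_add_distrib]
  exact sum_congr rfl fun i _ => by have : x i ≤ a i := hx i; omega

lemma sum_tsub_add_le_max (hx : x ≤ a)
    (h : ∑ i ∈ A, y i ≤ ∑ i ∈ A, x i ∨
      ∑ i ∈ A, a i + ∑ i ∈ A, y i ≤ ∑ i ∈ A, b i + ∑ i ∈ A, x i) :
    ∑ i ∈ A, (a i - x i + y i) ≤ max (∑ i ∈ A, a i) (∑ i ∈ A, b i) := by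
  have := sum_tsub_add_add_sum_eq (A := A) (y := y) hx
  rw [le_max_iff]
  omega

lemma sum_add_sum_le_sum_add_sum [Fintype ι] [DecidableEq ι] (hx : x ≤ a) :
    ∑ i ∈ A, a i + ∑ i, x i ≤ ∑ i, a i + ∑ i ∈ A, x i := by
  rw [← sum_add_sum_compl A x, ← sum_add_sum_compl A a]
  have := sum_le_sum (s := Aᶜ) fun i _ => hx i
  omega

lemma sum_eq_zero_of_support_subset {s : Finset ι} (hax : ∀ i, a i ≠ 0 → x i ≠ 0)
    (h : ∑ i ∈ s, x i = 0) : ∑ i ∈ s, a i = 0 := by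
  rw [sum_eq_zero_iff] at h ⊢
  exact fun i hi => by_contra fun hai => hax i hai (h i hi)

lemma sum_eq_sum_univ_of_support_subset [Fintype ι] [DecidableEq ι]
    (hax : ∀ i, a i ≠ 0 → x i ≠ 0) (h : ∑ i ∈ A, x i = ∑ i, x i) : ∑ i ∈ A, a i = ∑ i, a i := by
  have hx : ∑ i ∈ Aᶜ, x i = 0 := by have := sum_add_sum_compl A x; omega
  rw [← sum_add_sum_compl A a, sum_eq_zero_of_support_subset hax hx, add_zero]

end Exchange

section Indicator

variable {ι : Type*} [DecidableEq ι] {a : ι → ℕ} {u v : ι}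

lemma sum_indicator_le_one [Fintype ι] (A : Finset ι) (u : ι) :
    ∑ i ∈ A, (if i = u then 1 else 0) ≤ 1 :=
  (sum_le_sum_of_subset (subset_univ A)).trans (by simp)

lemma indicator_le (hu : a u ≠ 0) : (fun i => if i = u then 1 else 0) ≤ a := fun i => by
  by_cases hi : i = u
  · subst hi; simp only [if_true]; omega
  · simp [hi]

lemma indicator_add_indicator_le (huv : u ≠ v) (hu : a u ≠ 0) (hv : a v ≠ 0) :
    (fun i => (if i = u then 1 else 0) + (if i = v then 1 else 0)) ≤ a := fun i => by
  by_cases hiu : i = u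
  · subst hiu; simp only [if_true, huv, if_false]; omega
  · by_cases hiv : i = v
    · subst hiv; simp only [hiu, if_true, if_false]; omega
    · simp [hiu, hiv]

end Indicator

variable {ι : Type*} [Fintype ι] [DecidableEq ι] {a b : ι → ℕ}

theorem sum_exchange_single_le_max (hab : ∑ i, a i = ∑ i, b i) {u k : ι}
    (hu : a u ≠ 0) (hk : b k ≠ 0)
    (hsupp : (∀ i, a i ≠ 0 → i = u) ∨ (∀ i, b i ≠ 0 → i = k)) (A : Finset ι) :
    ∑ i ∈ A, (a i - (if i = u then 1 else 0) + (if i = k then 1 else 0))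
      ≤ max (∑ i ∈ A, a i) (∑ i ∈ A, b i) := by
  refine sum_tsub_add_le_max (indicator_le hu) ?_
  have hY := sum_indicator_le_one A k
  rcases hsupp with ha | hb
  · have hs := sum_eq_zero_of_support_subset (s := A) (a := a)
      (x := fun i => if i = u then 1 else 0) fun i hi => by simp [ha i hi]
    have hYt := sum_le_sum (s := A) fun i _ => indicator_le hk i
    omega
  · have hs := sum_add_sum_le_sum_add_sum (A := A) (indicator_le hu)
    have ht := sum_eq_sum_univ_of_support_subset (A := A) (a := b)
      (x := fun i => if i = k then 1 else 0) fun i hi => by simp [hb i hi]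
    have hsum_x : ∑ i, (if i = u then 1 else 0) = 1 := by simp
    have hsum_y : ∑ i, (if i = k then 1 else 0) = 1 := by simp
    omega

theorem sum_exchange_pair_le_max (hab : ∑ i, a i = ∑ i, b i) {u v k l : ι}
    (huv : u ≠ v) (hkl : k ≠ l)
    (ha : ∀ i, a i ≠ 0 ↔ (i = u ∨ i = v)) (hb : ∀ i, b i ≠ 0 ↔ (i = k ∨ i = l))
    (A : Finset ι) :
    ∑ i ∈ A, (a i - (if i = u then 1 else 0) - (if i = v then 1 else 0)
        + (if i = k then 1 else 0) + (if i = l then 1 else 0))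
      ≤ max (∑ i ∈ A, a i) (∑ i ∈ A, b i) := by
  set x : ι → ℕ := fun i => (if i = u then 1 else 0) + (if i = v then 1 else 0)
  set y : ι → ℕ := fun i => (if i = k then 1 else 0) + (if i = l then 1 else 0)
  have hxa : x ≤ a :=
    indicator_add_indicator_le huv ((ha u).2 (.inl rfl)) ((ha v).2 (.inr rfl))
  have hyb : y ≤ b :=
    indicator_add_indicator_le hkl ((hb k).2 (.inl rfl)) ((hb l).2 (.inr rfl))
  simp only [Nat.sub_sub, add_assoc]
  refine sum_tsub_add_le_max (x := x) (y := y) hxa ?_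
  have hsum_x : ∑ i, x i = 2 := by simp [x, sum_add_distrib]
  have hsum_y : ∑ i, y i = 2 := by simp [y, sum_add_distrib]
  have hY : ∑ i ∈ A, y i ≤ 2 := hsum_y ▸ sum_le_sum_of_subset (subset_univ A)
  have hYt := sum_le_sum (s := A) fun i _ => hyb i
  have hs := sum_add_sum_le_sum_add_sum (A := A) hxa
  have hs0 := sum_eq_zero_of_support_subset (s := A) (a := a) (x := x) fun i hi => by
    rcases (ha i).1 hi with rfl | rfl <;> simp [x]
  have ht := sum_eq_sum_univ_of_support_subset (A := A) (a := b) (x := y) fun i hi => by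
    rcases (hb i).1 hi with rfl | rfl <;> simp [y]
  omega

theorem stmt10_general (q r : ℕ)
    (a b : Fin q → ℕ) (ha : ∑ i, a i = r) (hb : ∑ i, b i = r) :
    (∀ u k : Fin q, a u ≠ 0 → b k ≠ 0 →
      ((∀ i, a i ≠ 0 → i = u) ∨ (∀ i, b i ≠ 0 → i = k)) →
      ∀ A : Finset (Fin q), A.Nonempty →
        ∑ i ∈ A, (a i - (if i = u then 1 else 0) + (if i = k then 1 else 0))
          ≤ max (∑ i ∈ A, a i) (∑ i ∈ A, b i)) ∧
    (∀ u v k l : Fin q, u ≠ v → k ≠ l →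
      (∀ i, a i ≠ 0 ↔ (i = u ∨ i = v)) →
      (∀ i, b i ≠ 0 ↔ (i = k ∨ i = l)) →
      ∀ A : Finset (Fin q), A.Nonempty →
        ∑ i ∈ A, (a i - (if i = u then 1 else 0) - (if i = v then 1 else 0)
            + (if i = k then 1 else 0) + (if i = l then 1 else 0))
          ≤ max (∑ i ∈ A, a i) (∑ i ∈ A, b i)) :=
  ⟨fun _ _ hu hk hsupp A _ => sum_exchange_single_le_max (ha.trans hb.symm) hu hk hsupp A,
    fun _ _ _ _ huv hkl hsa hsb A _ =>
      sum_exchange_pair_le_max (ha.trans hb.symm) huv hkl hsa hsb A⟩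

/-- Lemma (l:some-divisibility): divisibility conditions II.
(1) If `u ∈ Supp a`, `k ∈ Supp b`, and `Supp a = {u}` or `Supp b = {k}`, then
`ε^(a - e_u + e_k)` divides `lcm(ε^a, ε^b)`, i.e. for every nonempty `A`,
`∑_{i ∈ A} (a - e_u + e_k) i ≤ max (∑_{i ∈ A} a i) (∑_{i ∈ A} b i)`.
(2) If `Supp a = {u, v}` and `Supp b = {k, l}` with `u ≠ v`, `k ≠ l`, then
`ε^(a - e_u - e_v + e_k + e_l)` divides `lcm(ε^a, ε^b)`. -/
theorem stmt10 (q r : ℕ) (hq : 1 ≤ q) (hr : 1 ≤ r)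
    (a b : Fin q → ℕ) (ha : ∑ i, a i = r) (hb : ∑ i, b i = r) :
    (∀ u k : Fin q, a u ≠ 0 → b k ≠ 0 →
      ((∀ i, a i ≠ 0 → i = u) ∨ (∀ i, b i ≠ 0 → i = k)) →
      ∀ A : Finset (Fin q), A.Nonempty →
        ∑ i ∈ A, (a i - (if i = u then 1 else 0) + (if i = k then 1 else 0))
          ≤ max (∑ i ∈ A, a i) (∑ i ∈ A, b i)) ∧
    (∀ u v k l : Fin q, u ≠ v → k ≠ l →
      (∀ i, a i ≠ 0 ↔ (i = u ∨ i = v)) →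
      (∀ i, b i ≠ 0 ↔ (i = k ∨ i = l)) →
      ∀ A : Finset (Fin q), A.Nonempty →
        ∑ i ∈ A, (a i - (if i = u then 1 else 0) - (if i = v then 1 else 0)
            + (if i = k then 1 else 0) + (if i = l then 1 else 0))
          ≤ max (∑ i ∈ A, a i) (∑ i ∈ A, b i)) :=
  stmt10_general q r a b ha hb
end

section
/- Let a, b, c ∈ N^r_q. If lcm(ε^a, ε^b) = lcm(ε^a, ε^c), i.e., max(∑_{i∈A} a_i, ∑_{i∈A} b_i) = max(∑_{i∈A} a_i, ∑_{i∈A} c_i) for every nonempty A ⊆ [q], then b = c. -/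
open Finset

/-!
Suppose `b ≠ c` and let `T` be the set of coordinates where `b i < c i`. Since `b` and `c` have
the same total, `b` falls short of `c` on `T` and exceeds it on the complement `Tᶜ`. The identity
`max (a A) (b A) = max (a A) (c A)` for `A = T` and `A = Tᶜ` then forces `a` to dominate the
larger of `b`, `c` on both parts, so the total of `a` strictly exceeds that of `b`, which is
impossible.
-/

theorem le_of_max_eq_max_of_lt {α : Type*} [LinearOrder α] {x y z : α}
    (h : max x y = max x z) (hyz : y < z) : z ≤ x := by
  by_contra! hxz
  rw [max_eq_right hxz.le] at h
  exact (max_lt hxz hyz).ne h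

theorem sum_le_of_max_sum_eq_max_sum {ι M : Type*} [AddCommMonoid M] [LinearOrder M]
    {a b c : ι → M}
    (h : ∀ A : Finset ι, A.Nonempty →
      max (∑ i ∈ A, a i) (∑ i ∈ A, b i) = max (∑ i ∈ A, a i) (∑ i ∈ A, c i))
    {A : Finset ι} (hA : ∑ i ∈ A, b i < ∑ i ∈ A, c i) :
    ∑ i ∈ A, c i ≤ ∑ i ∈ A, a i := by
  have hAne : A.Nonempty := nonempty_iff_ne_empty.2 fun hA0 => by simp [hA0] at hA
  exact le_of_max_eq_max_of_lt (h A hAne) hA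

section

variable {ι M : Type*} [Fintype ι] [AddCommMonoid M] [LinearOrder M]
  [IsOrderedCancelAddMonoid M]

theorem exists_lt_of_sum_eq_of_ne {b c : ι → M} (hbc : ∑ i, b i = ∑ i, c i) (hne : b ≠ c) :
    ∃ i, b i < c i := by
  by_contra! hle
  refine hne (funext fun i => ?_)
  exact ((sum_eq_sum_iff_of_le fun i _ => hle i).1 hbc.symm i (mem_univ i)).symm

theorem sum_compl_lt_of_sum_lt [DecidableEq ι] {b c : ι → M} (hbc : ∑ i, b i = ∑ i, c i)
    {A : Finset ι} (hA : ∑ i ∈ A, b i < ∑ i ∈ A, c i) :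
    ∑ i ∈ Aᶜ, c i < ∑ i ∈ Aᶜ, b i := by
  by_contra! hAc
  have hlt := add_lt_add_of_lt_of_le hA hAc
  rw [sum_add_sum_compl, sum_add_sum_compl] at hlt
  exact hlt.ne hbc

theorem eq_of_max_sum_eq_max_sum {a b c : ι → M}
    (hab : ∑ i, a i ≤ ∑ i, b i) (hbc : ∑ i, b i = ∑ i, c i)
    (h : ∀ A : Finset ι, A.Nonempty →
      max (∑ i ∈ A, a i) (∑ i ∈ A, b i) = max (∑ i ∈ A, a i) (∑ i ∈ A, c i)) :
    b = c := by
  classical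
  by_contra hne
  set T := univ.filter fun i => b i < c i
  obtain ⟨j, hj⟩ := exists_lt_of_sum_eq_of_ne hbc hne
  have hT : ∑ i ∈ T, b i < ∑ i ∈ T, c i :=
    sum_lt_sum_of_nonempty ⟨j, by simp [T, hj]⟩ fun i hi => (mem_filter.1 hi).2
  have hTc : ∑ i ∈ Tᶜ, c i < ∑ i ∈ Tᶜ, b i := sum_compl_lt_of_sum_lt hbc hT
  have haT := sum_le_of_max_sum_eq_max_sum h hT
  have haTc := sum_le_of_max_sum_eq_max_sum (fun A hA => (h A hA).symm) hTc
  have hba : ∑ i, b i < ∑ i, a i := by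
    rw [← sum_add_sum_compl T b, ← sum_add_sum_compl T a]
    exact add_lt_add_of_lt_of_le (hT.trans_le haT) haTc
  exact hba.not_ge hab

end

theorem stmt11_general (q r : ℕ)
    (a b c : Fin q → ℕ)
    (ha : ∑ i, a i = r) (hb : ∑ i, b i = r) (hc : ∑ i, c i = r)
    (h : ∀ A : Finset (Fin q), A.Nonempty →
      max (∑ i ∈ A, a i) (∑ i ∈ A, b i) = max (∑ i ∈ A, a i) (∑ i ∈ A, c i)) :
    b = c :=
  eq_of_max_sum_eq_max_sum (ha.trans hb.symm).le (hb.trans hc.symm) h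

/-- Proposition (p:edges): if `a, b, c ∈ N^r_q` and
`lcm(ε^a, ε^b) = lcm(ε^a, ε^c)` (i.e. the exponents of every variable `x_A`,
`A` nonempty, agree), then `b = c`. -/
theorem stmt11 (q r : ℕ) (hq : 1 ≤ q) (hr : 1 ≤ r)
    (a b c : Fin q → ℕ)
    (ha : ∑ i, a i = r) (hb : ∑ i, b i = r) (hc : ∑ i, c i = r)
    (h : ∀ A : Finset (Fin q), A.Nonempty →
      max (∑ i ∈ A, a i) (∑ i ∈ A, b i) = max (∑ i ∈ A, a i) (∑ i ∈ A, c i)) :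
    b = c :=
  stmt11_general q r a b c ha hb hc h
end

section
/- Let a, b ∈ N^r_q satisfy: |Supp(a) ∪ Supp(b)| ≤ 4, a > b in the lexicographic order, and |a_s − b_s| > 1 for some s ∈ [q]. Then there exists c ∈ N^r_q such that: (1) c ≠ b and a > c in the lexicographic order; (2) the two-element set {a, c} is a Scarf face of E_q^r; and (3) ∑_{i∈A} c_i ≤ max(∑_{i∈A} a_i, ∑_{i∈A} b_i) for every nonempty A ⊆ [q] (i.e., ε^c divides lcm(ε^a, ε^b)). In particular, {a, b} is not a Scarf face of E_q^r. -/
/-!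
Let `i₀` be the first index with `a i₀ ≠ b i₀`, `P = {a < b}` and `N = {a > b}`. Moving one unit
from each coordinate of some `U ⊆ N` with `i₀ ∈ U` to the coordinates of some `V ⊆ P`,
`|U| = |V|`, gives `c = a - 1_U + 1_V < a`. With `m = a + 1_V = c + 1_U`, any `z ∈ N^r_q` below
`lcm(ε^a, ε^c)` satisfies `z ≤ m`, and on the set where `z = m` it can stay below `max(a, c)` only if
that set misses `V` or `U`; this forces `z ∈ {a, c}`, so `{a, c}` is a Scarf face.
Since `|P| + |N| ≤ 4`, one may take `U = {i₀}`, `V = {p}` when `|P| = 1` or `|N| = 1`, and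
`U = N`, `V = P` when `|P| = |N| = 2`; in each case counting on `A` shows `ε^c ∣ lcm(ε^a, ε^b)`.
Finally `c ≠ b` as `|a_s - c_s| ≤ 1 < |a_s - b_s|`, and adding `c` to `{a, b}` does not change
its label, so `{a, b}` is not a Scarf face.
-/

open Finset

/-- The lexicographic order on `ℕ^q`: `a > b` iff there is `i` with
`a j = b j` for all `j < i` and `a i > b i`. -/
def lexGT {q : ℕ} (a b : Fin q → ℕ) : Prop :=
  ∃ i : Fin q, (∀ j : Fin q, j < i → a j = b j) ∧ b i < a i

section Counting

variable {ι : Type*} [DecidableEq ι]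

lemma sum_add_ite_mem (s V : Finset ι) (a : ι → ℕ) :
    ∑ i ∈ s, (a i + if i ∈ V then 1 else 0) = ∑ i ∈ s, a i + #(s ∩ V) := by
  rw [sum_add_distrib, sum_boole, filter_mem_eq_inter, Nat.cast_id]

lemma sum_add_card_inter_eq {U V : Finset ι} {a c : ι → ℕ}
    (hac : ∀ i, a i + (if i ∈ V then 1 else 0) = c i + if i ∈ U then 1 else 0)
    (s : Finset ι) : ∑ i ∈ s, a i + #(s ∩ V) = ∑ i ∈ s, c i + #(s ∩ U) := by
  rw [← sum_add_ite_mem, ← sum_add_ite_mem]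
  exact sum_congr rfl fun i _ => hac i

lemma sum_add_card_le_sum {s B : Finset ι} {a b : ι → ℕ} (hBs : B ⊆ s)
    (hle : ∀ i ∈ s, a i ≤ b i) (hlt : ∀ i ∈ B, a i < b i) :
    ∑ i ∈ s, a i + #B ≤ ∑ i ∈ s, b i := by
  rw [← inter_eq_right.mpr hBs, ← sum_add_ite_mem]
  refine sum_le_sum fun i hi => ?_
  split_ifs with hiB
  · exact hlt i hiB
  · simpa using hle i hi

variable [Fintype ι]

lemma sum_add_card_le_sum_of_compl {A B : Finset ι} {a b : ι → ℕ}
    (htot : ∑ i, a i = ∑ i, b i) (hBA : Disjoint B A)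
    (hle : ∀ i ∉ A, b i ≤ a i) (hlt : ∀ i ∈ B, b i < a i) :
    ∑ i ∈ A, a i + #B ≤ ∑ i ∈ A, b i := by
  have hcompl := sum_add_card_le_sum (subset_compl_iff_disjoint_right.mpr hBA)
    (fun i hi => hle i (mem_compl.mp hi)) hlt
  have ha := sum_add_sum_compl A a
  have hb := sum_add_sum_compl A b
  omega

lemma eq_ite_of_sum_eq_card {V : Finset ι} {d : ι → ℕ} (hV : ∀ i ∈ V, 0 < d i)
    (hsum : ∑ i, d i = #V) (i : ι) : d i = if i ∈ V then 1 else 0 := by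
  have hle : ∀ j ∈ univ, (if j ∈ V then 1 else 0) ≤ d j := fun j _ => by
    split_ifs with hj
    exacts [hV j hj, Nat.zero_le _]
  have heq : ∑ j, (if j ∈ V then 1 else 0) = ∑ j, d j := by simp [hsum]
  exact ((sum_eq_sum_iff_of_le hle).mp heq i (mem_univ i)).symm

lemma eq_of_lt_on_of_sum_eq {V : Finset ι} {a z m : ι → ℕ}
    (ham : ∀ i, a i + (if i ∈ V then 1 else 0) = m i) (hzm : ∀ i, z i ≤ m i)
    (hsum : ∑ i, z i = ∑ i, a i) (hV : ∀ i ∈ V, z i < m i) : z = a := by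
  have hdef : ∑ i, (m i - z i) = #V := by
    have hm : ∑ i, m i = ∑ i, a i + #V := by
      rw [← sum_congr rfl fun i _ => ham i, sum_add_ite_mem, univ_inter]
    have hsplit : ∑ i, (m i - z i) + ∑ i, z i = ∑ i, m i := by
      rw [← sum_add_distrib]
      exact sum_congr rfl fun i _ => Nat.sub_add_cancel (hzm i)
    omega
  funext i
  have hd := eq_ite_of_sum_eq_card (fun j hj => Nat.sub_pos_of_lt (hV j hj)) hdef i
  have := ham i
  have := hzm i
  split_ifs at * <;> omega

/-- With `m = a + 1_V = c + 1_U`, on `A = {z = m}` we get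
`m_A = z_A ≤ max (m_A - |A ∩ V|) (m_A - |A ∩ U|)`, so `A` misses `V` or `U`. -/
lemma eq_or_eq_of_sum_le_max {U V : Finset ι} {a c z : ι → ℕ}
    (hac : ∀ i, a i + (if i ∈ V then 1 else 0) = c i + if i ∈ U then 1 else 0)
    (hcard : #U = #V) (hza : ∑ i, z i = ∑ i, a i)
    (hle : ∀ A : Finset ι, A.Nonempty → ∑ i ∈ A, z i ≤ max (∑ i ∈ A, a i) (∑ i ∈ A, c i)) :
    z = a ∨ z = c := by
  set m : ι → ℕ := fun i => a i + if i ∈ V then 1 else 0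
  have hcm : ∀ i, c i + (if i ∈ U then 1 else 0) = m i := fun i => (hac i).symm
  have hzm : ∀ i, z i ≤ m i := fun i => by
    have h := hle {i} (singleton_nonempty i)
    simp only [sum_singleton] at h
    have := hcm i
    simp only [m] at *
    omega
  have hzc : ∑ i, z i = ∑ i, c i := by
    have := sum_add_card_inter_eq hac univ
    simp only [univ_inter] at this
    omega
  set A := univ.filter fun i => z i = m i
  have hmiss : #(A ∩ V) = 0 ∨ #(A ∩ U) = 0 := by
    rcases A.eq_empty_or_nonempty with hA | hA
    · simp [hA]
    have hzA : ∑ i ∈ A, z i = ∑ i ∈ A, m i := sum_congr rfl fun i hi => (mem_filter.mp hi).2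
    have hmA : ∑ i ∈ A, m i = ∑ i ∈ A, a i + #(A ∩ V) := sum_add_ite_mem A V a
    have := sum_add_card_inter_eq hac A
    have := hle A hA
    omega
  have hlt_of_miss : ∀ W : Finset ι, #(A ∩ W) = 0 → ∀ i ∈ W, z i < m i := fun W hW i hi =>
    lt_of_le_of_ne (hzm i) fun h =>
      notMem_empty i (card_eq_zero.mp hW ▸ mem_inter.mpr ⟨mem_filter.mpr ⟨mem_univ i, h⟩, hi⟩)
  rcases hmiss with hV | hU
  · exact Or.inl (eq_of_lt_on_of_sum_eq (fun i => rfl) hzm hza (hlt_of_miss V hV))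
  · exact Or.inr (eq_of_lt_on_of_sum_eq hcm hzm hzc (hlt_of_miss U hU))

lemma card_lt_add_card_gt_le_card_support (a b : ι → ℕ) :
    #(univ.filter fun i => a i < b i) + #(univ.filter fun i => b i < a i) ≤
      #((univ.filter fun i => a i ≠ 0) ∪ (univ.filter fun i => b i ≠ 0)) := by
  rw [← card_union_of_disjoint (disjoint_filter.mpr fun i _ h => lt_asymm h)]
  refine card_le_card fun i hi => ?_
  simp only [mem_union, mem_filter, mem_univ, true_and] at hi ⊢
  omega

end Counting

section Scarf

variable {q r : ℕ}

lemma eLabel_pair (a c : Fin q → ℕ) (A : Finset (Fin q)) :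
    eLabel {a, c} A = max (∑ i ∈ A, a i) (∑ i ∈ A, c i) := by
  simp [eLabel]

lemma mem_of_subset_pair_of_eLabel_eq {τ : Finset (Fin q → ℕ)} {a c : Fin q → ℕ}
    (hsub : τ ⊆ {a, c}) {A : Finset (Fin q)} (hlab : eLabel τ A = eLabel {a, c} A)
    (hlt : ∑ i ∈ A, c i < ∑ i ∈ A, a i) : a ∈ τ := by
  by_contra ha
  have hle : eLabel τ A ≤ ∑ i ∈ A, c i := Finset.sup_le fun z hz => by
    rcases mem_insert.mp (hsub hz) with rfl | hzc
    exacts [absurd hz ha, by rw [mem_singleton.mp hzc]]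
  rw [hlab, eLabel_pair] at hle
  omega

lemma isScarf_pair {a c : Fin q → ℕ} (ha : ∑ i, a i = r) (hc : ∑ i, c i = r)
    (hmem : ∀ z : Fin q → ℕ, ∑ i, z i = r →
      (∀ A : Finset (Fin q), A.Nonempty → ∑ i ∈ A, z i ≤ max (∑ i ∈ A, a i) (∑ i ∈ A, c i)) →
      z = a ∨ z = c)
    (hca : ∃ A : Finset (Fin q), A.Nonempty ∧ ∑ i ∈ A, c i < ∑ i ∈ A, a i)
    (hac : ∃ A : Finset (Fin q), A.Nonempty ∧ ∑ i ∈ A, a i < ∑ i ∈ A, c i) :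
    IsScarf q r {a, c} := by
  refine ⟨insert_nonempty _ _, by simp [ha, hc], fun τ _ hτr hlab => ?_⟩
  have hsub : τ ⊆ {a, c} := fun z hz => by
    have hz' : ∀ A : Finset (Fin q), A.Nonempty →
        ∑ i ∈ A, z i ≤ max (∑ i ∈ A, a i) (∑ i ∈ A, c i) := fun A hA => by
      rw [← eLabel_pair, ← hlab A hA]
      exact le_sup (f := fun z => ∑ i ∈ A, z i) hz
    rcases hmem z (hτr z hz) hz' with rfl | rfl <;> simp
  obtain ⟨A, hA, hltA⟩ := hca
  obtain ⟨C, hC, hltC⟩ := hac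
  have haτ := mem_of_subset_pair_of_eLabel_eq hsub (hlab A hA) hltA
  have hcτ := mem_of_subset_pair_of_eLabel_eq (pair_comm a c ▸ hsub)
    (pair_comm a c ▸ hlab C hC) hltC
  exact hsub.antisymm (insert_subset haτ (singleton_subset_iff.mpr hcτ))

lemma isScarf_pair_of_add_ite_eq {U V : Finset (Fin q)} (hUV : Disjoint U V) (hU : U.Nonempty)
    (hcard : #U = #V) {a c : Fin q → ℕ}
    (hac : ∀ i, a i + (if i ∈ V then 1 else 0) = c i + if i ∈ U then 1 else 0)
    (ha : ∑ i, a i = r) : IsScarf q r {a, c} := by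
  have hsum := sum_add_card_inter_eq hac
  have hc : ∑ i, c i = r := by
    have := hsum univ
    simp only [univ_inter] at this
    omega
  refine isScarf_pair ha hc (fun z hz hle => eq_or_eq_of_sum_le_max hac hcard (hz.trans ha.symm) hle)
    ⟨U, hU, ?_⟩ ⟨V, card_pos.mp (hcard ▸ card_pos.mpr hU), ?_⟩
  · have := hsum U
    rw [inter_self, disjoint_iff_inter_eq_empty.mp hUV, card_empty] at this
    have := card_pos.mpr hU
    omega
  · have := hsum V
    rw [inter_self, disjoint_iff_inter_eq_empty.mp hUV.symm, card_empty] at this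
    have := card_pos.mpr hU
    omega

lemma not_isScarf_of_le_eLabel {σ : Finset (Fin q → ℕ)} {c : Fin q → ℕ} (hc : ∑ i, c i = r)
    (hcσ : c ∉ σ) (hle : ∀ A : Finset (Fin q), A.Nonempty → ∑ i ∈ A, c i ≤ eLabel σ A) :
    ¬ IsScarf q r σ := fun ⟨_, hσr, huniq⟩ => by
  have hσ : insert c σ = σ := huniq (insert c σ) (insert_nonempty _ _) (by simpa [hc] using hσr)
    fun A hA => ?_
  · exact hcσ (hσ ▸ mem_insert_self c σ)
  · rw [eLabel, sup_insert]
    exact sup_eq_right.mpr (hle A hA)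

end Scarf

section Construction

def IsScarfWitness (q r : ℕ) (a b c : Fin q → ℕ) : Prop :=
  (∑ i, c i = r) ∧ c ≠ b ∧ lexGT a c ∧ IsScarf q r {a, c} ∧
    ∀ A : Finset (Fin q), A.Nonempty → ∑ i ∈ A, c i ≤ max (∑ i ∈ A, a i) (∑ i ∈ A, b i)

variable {q r : ℕ} {a b : Fin q → ℕ}

lemma exists_isScarf_pair_of_swap (ha : ∑ i, a i = r) {i₀ : Fin q}
    (hbef : ∀ j, j < i₀ → a j = b j) {U V : Finset (Fin q)}
    (hU : ∀ i ∈ U, b i < a i) (hV : ∀ i ∈ V, a i < b i) (hi₀ : i₀ ∈ U) (hcard : #U = #V)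
    (hdiv : ∀ A : Finset (Fin q),
      #(A ∩ V) + ∑ i ∈ A, a i ≤ #(A ∩ U) + max (∑ i ∈ A, a i) (∑ i ∈ A, b i))
    (hs : ∃ s : Fin q, a s + 1 < b s ∨ b s + 1 < a s) :
    ∃ c, IsScarfWitness q r a b c := by
  have hUV : Disjoint U V := disjoint_left.mpr fun i hiU hiV => by
    have := hU i hiU
    have := hV i hiV
    omega
  set c : Fin q → ℕ := fun i => a i + (if i ∈ V then 1 else 0) - if i ∈ U then 1 else 0
  have hac : ∀ i, a i + (if i ∈ V then 1 else 0) = c i + if i ∈ U then 1 else 0 := fun i => by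
    by_cases hiU : i ∈ U
    · have := hU i hiU
      simp only [c, hiU, if_true]
      omega
    · simp [c, hiU]
  have hscarf := isScarf_pair_of_add_ite_eq hUV ⟨i₀, hi₀⟩ hcard hac ha
  have hsum := sum_add_card_inter_eq hac
  have hout : ∀ j, a j = b j → c j = a j := fun j hj => by
    have hjU : j ∉ U := fun h => (hU j h).ne' hj
    have hjV : j ∉ V := fun h => (hV j h).ne hj
    simpa [hjU, hjV] using (hac j).symm
  refine ⟨c, hscarf.2.1 c (by simp), fun hcb => ?_, ⟨i₀, fun j hj => (hout j (hbef j hj)).symm, ?_⟩,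
    hscarf, fun A _ => by have := hsum A; have := hdiv A; omega⟩
  · obtain ⟨s, hs⟩ := hs
    have := hac s
    rw [hcb] at this
    split_ifs at this <;> omega
  · have := hac i₀
    simp only [hi₀, if_true, disjoint_left.mp hUV hi₀, if_false] at this
    omega

lemma card_inter_add_sum_le_of_single (htot : ∑ i, a i = ∑ i, b i) {i₀ p : Fin q}
    (hi₀ : b i₀ < a i₀) (hp : a p < b p)
    (hone : (∀ i, a i < b i → i = p) ∨ ∀ i, b i < a i → i = i₀) (A : Finset (Fin q)) :
    #(A ∩ {p}) + ∑ i ∈ A, a i ≤ #(A ∩ {i₀}) + max (∑ i ∈ A, a i) (∑ i ∈ A, b i) := by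
  have hmax := le_max_left (∑ i ∈ A, a i) (∑ i ∈ A, b i)
  by_cases hpA : p ∈ A
  swap
  · simp only [inter_singleton_of_notMem hpA, card_empty]
    omega
  by_cases hi₀A : i₀ ∈ A
  · simp [inter_singleton_of_mem hpA, inter_singleton_of_mem hi₀A]
  have hlt : ∑ i ∈ A, a i + 1 ≤ ∑ i ∈ A, b i := by
    rcases hone with hP | hN
    · exact sum_add_card_le_sum_of_compl (B := {i₀}) htot (disjoint_singleton_left.mpr hi₀A)
        (fun i hi => not_lt.mp fun h => hi (hP i h ▸ hpA)) (by simpa using hi₀)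
    · exact sum_add_card_le_sum (B := {p}) (singleton_subset_iff.mpr hpA)
        (fun i hi => not_lt.mp fun h => hi₀A (hN i h ▸ hi)) (by simpa using hp)
  simp only [inter_singleton_of_mem hpA, inter_singleton_of_notMem hi₀A, card_singleton,
    card_empty]
  omega

lemma card_inter_add_sum_le_of_card_two (htot : ∑ i, a i = ∑ i, b i) {P N : Finset (Fin q)}
    (hP : ∀ i, i ∈ P ↔ a i < b i) (hN : ∀ i, i ∈ N ↔ b i < a i) (hP2 : #P = 2) (hN2 : #N = 2)
    (A : Finset (Fin q)) :
    #(A ∩ P) + ∑ i ∈ A, a i ≤ #(A ∩ N) + max (∑ i ∈ A, a i) (∑ i ∈ A, b i) := by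
  have hmax := le_max_left (∑ i ∈ A, a i) (∑ i ∈ A, b i)
  have hmax' := le_max_right (∑ i ∈ A, a i) (∑ i ∈ A, b i)
  by_cases hle : #(A ∩ P) ≤ #(A ∩ N)
  · omega
  rcases (A ∩ N).eq_empty_or_nonempty with hAN | hAN
  · rw [hAN, card_empty] at hle
    have := sum_add_card_le_sum inter_subset_left
      (fun i hi => not_lt.mp fun h => (eq_empty_iff_forall_notMem.mp hAN) i
        (mem_inter.mpr ⟨hi, (hN i).mpr h⟩))
      (fun i hi => (hP i).mp (mem_inter.mp hi).2)
    omega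
  have hAN1 := card_pos.mpr hAN
  have hAP : #(A ∩ P) = 2 := by
    have := card_le_card (inter_subset_right (s₁ := A) (s₂ := P))
    omega
  have hPA : P ⊆ A := fun i hi => mem_of_mem_inter_left
    ((eq_of_subset_of_card_le inter_subset_right (by omega) : A ∩ P = P) ▸ hi)
  have hNA : #(N \ A) = 1 := by
    rw [card_sdiff]
    omega
  have := sum_add_card_le_sum_of_compl htot sdiff_disjoint
    (fun i hi => not_lt.mp fun h => hi (hPA ((hP i).mpr h)))
    (fun i hi => (hN i).mp (mem_sdiff.mp hi).1)
  omega

lemma exists_isScarfWitness_of_card_le_four (ha : ∑ i, a i = r) (hb : ∑ i, b i = r)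
    {i₀ : Fin q} (hbef : ∀ j, j < i₀ → a j = b j) (hi₀ : b i₀ < a i₀)
    (hsupp : #((univ.filter fun i => a i ≠ 0) ∪ (univ.filter fun i => b i ≠ 0)) ≤ 4)
    (hs : ∃ s : Fin q, a s + 1 < b s ∨ b s + 1 < a s) :
    ∃ c, IsScarfWitness q r a b c := by
  set P := univ.filter fun i => a i < b i
  set N := univ.filter fun i => b i < a i
  have hP : ∀ i, i ∈ P ↔ a i < b i := by simp [P]
  have hN : ∀ i, i ∈ N ↔ b i < a i := by simp [N]
  have htot : ∑ i, a i = ∑ i, b i := ha.trans hb.symm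
  obtain ⟨p, hp⟩ : ∃ p, a p < b p := by
    by_contra! h
    exact (sum_lt_sum (fun i _ => h i) ⟨i₀, mem_univ _, hi₀⟩).ne htot.symm
  have hPN : #P + #N ≤ 4 := (card_lt_add_card_gt_le_card_support a b).trans hsupp
  by_cases hsingle : #P = 1 ∨ #N = 1
  · have hone : (∀ i, a i < b i → i = p) ∨ ∀ i, b i < a i → i = i₀ := hsingle.imp
      (fun h i hi => card_le_one.mp h.le i ((hP i).mpr hi) p ((hP p).mpr hp))
      (fun h i hi => card_le_one.mp h.le i ((hN i).mpr hi) i₀ ((hN i₀).mpr hi₀))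
    exact exists_isScarf_pair_of_swap ha hbef (U := {i₀}) (V := {p}) (by simpa using hi₀)
      (by simpa using hp) (mem_singleton_self i₀) rfl
      (card_inter_add_sum_le_of_single htot hi₀ hp hone) hs
  · have hP1 := card_pos.mpr ⟨p, (hP p).mpr hp⟩
    have hN1 := card_pos.mpr ⟨i₀, (hN i₀).mpr hi₀⟩
    have hP2 : #P = 2 := by omega
    have hN2 : #N = 2 := by omega
    exact exists_isScarf_pair_of_swap ha hbef (fun i => (hN i).mp) (fun i => (hP i).mp)
      ((hN i₀).mpr hi₀) (hN2.trans hP2.symm)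
      (card_inter_add_sum_le_of_card_two htot hP hN hP2 hN2) hs

end Construction

theorem stmt12_general (q r : ℕ)
    (a b : Fin q → ℕ) (ha : ∑ i, a i = r) (hb : ∑ i, b i = r)
    (hsupp : ((Finset.univ.filter fun i => a i ≠ 0) ∪
              (Finset.univ.filter fun i => b i ≠ 0)).card ≤ 4)
    (hab : lexGT a b)
    (hs : ∃ s : Fin q, a s + 1 < b s ∨ b s + 1 < a s) :
    (∃ c : Fin q → ℕ, (∑ i, c i = r) ∧ c ≠ b ∧ lexGT a c ∧
      IsScarf q r {a, c} ∧
      (∀ A : Finset (Fin q), A.Nonempty →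
        ∑ i ∈ A, c i ≤ max (∑ i ∈ A, a i) (∑ i ∈ A, b i))) ∧
    ¬ IsScarf q r {a, b} := by
  obtain ⟨i₀, hbef, hi₀⟩ := hab
  obtain ⟨c, hcr, hcb, hac, hscarf, hdiv⟩ :=
    exists_isScarfWitness_of_card_le_four ha hb hbef hi₀ hsupp hs
  have hca : c ≠ a := fun h => by
    obtain ⟨i, -, hi⟩ := hac
    exact hi.ne (by rw [h])
  refine ⟨⟨c, hcr, hcb, hac, hscarf, hdiv⟩, not_isScarf_of_le_eLabel hcr (by simp [hca, hcb])
    fun A hA => (eLabel_pair a b A).symm ▸ hdiv A hA⟩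

/-- Lemma (l:find-c): if `a, b ∈ N^r_q` satisfy `|Supp a ∪ Supp b| ≤ 4`,
`a > b` lexicographically, and `|a s - b s| > 1` for some `s`, then there is
`c ∈ N^r_q` with `c ≠ b`, `a > c`, `{a, c}` a Scarf face of `E_q^r`, and
`ε^c ∣ lcm(ε^a, ε^b)`.  In particular `{a, b}` is not a Scarf face. -/
theorem stmt12 (q r : ℕ) (hq : 1 ≤ q) (hr : 1 ≤ r)
    (a b : Fin q → ℕ) (ha : ∑ i, a i = r) (hb : ∑ i, b i = r)
    (hsupp : ((Finset.univ.filter fun i => a i ≠ 0) ∪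
              (Finset.univ.filter fun i => b i ≠ 0)).card ≤ 4)
    (hab : lexGT a b)
    (hs : ∃ s : Fin q, a s + 1 < b s ∨ b s + 1 < a s) :
    (∃ c : Fin q → ℕ, (∑ i, c i = r) ∧ c ≠ b ∧ lexGT a c ∧
      IsScarf q r {a, c} ∧
      (∀ A : Finset (Fin q), A.Nonempty →
        ∑ i ∈ A, c i ≤ max (∑ i ∈ A, a i) (∑ i ∈ A, b i))) ∧
    ¬ IsScarf q r {a, b} :=
  stmt12_general q r a b ha hb hsupp hab hs
end
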